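/- For T admitting an A-adjoint and α ∈ [0,1], ‖T‖_{A,α}² ≤ ‖(1−α)T^{♯A}T + α TT^{♯A}‖_A. Consequently, w_A(T)² ≤ min over α ∈ [0,1] of ‖α T^{♯A}T + (1−α)TT^{♯A}‖_A. -/

import Mathlib

open scoped ComplexOrder
open ContinuousLinearMap Filter Topology

variable {H : Type*} [NormedAddCommGroup H] [InnerProductSpace ℂ H] [CompleteSpace H]

/-- The A-semi-inner product `⟨x, y⟩_A = ⟨A x, y⟩` (Mathlib convention: conjugate
linear in the first variable). -/
noncomputable def aInner (A : H →L[ℂ] H) (x y : H) : ℂ := inner ℂ (A x) y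

/-- The A-seminorm `‖x‖_A = sqrt ⟨x, x⟩_A`. -/
noncomputable def aNorm (A : H →L[ℂ] H) (x : H) : ℝ := Real.sqrt (aInner A x x).re

/-- `T` is A-bounded. -/
def ABounded (A T : H →L[ℂ] H) : Prop := ∃ c > 0, ∀ x, aNorm A (T x) ≤ c * aNorm A x

/-- The A-operator seminorm. -/
noncomputable def opNormA (A T : H →L[ℂ] H) : ℝ :=
  sSup {r | ∃ x ∈ closure (Set.range A), aNorm A x = 1 ∧ r = aNorm A (T x)}

/-- The A-numerical radius. -/
noncomputable def wA (A T : H →L[ℂ] H) : ℝ :=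
  sSup {r | ∃ x, aNorm A x = 1 ∧ r = ‖aInner A (T x) x‖}

/-- The A-Crawford number. -/
noncomputable def cA (A T : H →L[ℂ] H) : ℝ :=
  sInf {r | ∃ x, aNorm A x = 1 ∧ r = ‖aInner A (T x) x‖}

/-- The `A_α`-seminorm `‖T‖_{A,α}`. -/
noncomputable def alphaNorm (A T : H →L[ℂ] H) (α : ℝ) : ℝ :=
  sSup {r | ∃ x, aNorm A x = 1 ∧
    r = Real.sqrt (α * ‖aInner A (T x) x‖ ^ 2 + (1 - α) * aNorm A (T x) ^ 2)}

/-- `S` is the A-adjoint `T^{♯_A}` of `T`: the solution of `A X = T* A` whose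
range lies in the closure of the range of `A`. -/
def IsAAdjoint (A T S : H →L[ℂ] H) : Prop :=
  A ∘L S = (ContinuousLinearMap.adjoint T) ∘L A ∧ ∀ x, S x ∈ closure (Set.range A)

/-!
Write `S = T^{♯_A}` and `R = a • S T + b • T S`. Both `S T` and `T S` are symmetric for the
semi-inner product `⟨·, ·⟩_A`, and `⟨R x, x⟩_A = a ‖T x‖_A² + b ‖S x‖_A²`; by Cauchy–Schwarz this
is at most `‖R x‖_A ≤ ‖R‖_A` when `‖x‖_A = 1`. Together with
`|⟨T x, x⟩_A| ≤ min (‖T x‖_A) (‖S x‖_A)` this gives both inequalities.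

Since `‖R‖_A` is a supremum, it must be bounded above. For an `A`-selfadjoint `R`,
`‖R y‖_A² ≤ ‖y‖_A ‖R² y‖_A`, and iterating along the powers `R ^ 2 ^ n` gives
`‖R y‖_A ≤ ‖R‖ ‖y‖_A`. The supremum only ranges over `closure (range A)`, but the component
of `x` in `ker A` is invisible to `‖·‖_A`.
-/

open scoped InnerProductSpace

lemma le_of_forall_pow_two_pow_le_mul_pow {a b K : ℝ} (hb : 0 ≤ b)
    (h : ∀ n : ℕ, a ^ 2 ^ n ≤ K * b ^ 2 ^ n) : a ≤ b := by
  by_contra! hba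
  rcases hb.eq_or_lt with rfl | hb
  · have h0 := h 0
    simp only [pow_zero, pow_one, mul_zero] at h0
    linarith
  have hab : 1 < a / b := (one_lt_div hb).mpr hba
  obtain ⟨m, hm⟩ := pow_unbounded_of_one_lt K hab
  have hK : (a / b) ^ 2 ^ m ≤ K := by
    rw [div_pow, div_le_iff₀ (by positivity)]
    exact h m
  have := pow_le_pow_right₀ hab.le (Nat.lt_two_pow_self (n := m)).le
  linarith

lemma sq_sSup_le {s : Set ℝ} {c : ℝ} (hc : 0 ≤ c) (hs : ∀ r ∈ s, 0 ≤ r ∧ r ^ 2 ≤ c) :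
    sSup s ^ 2 ≤ c := by
  have hsup : sSup s ≤ √c :=
    Real.sSup_le (fun r hr => (le_abs_self r).trans (Real.abs_le_sqrt (hs r hr).2))
      (Real.sqrt_nonneg c)
  calc sSup s ^ 2 ≤ √c ^ 2 :=
        pow_le_pow_left₀ (Real.sSup_nonneg fun r hr => (hs r hr).1) hsup 2
    _ = c := Real.sq_sqrt hc

section Seminorm

variable {E : Type*} [NormedAddCommGroup E] [InnerProductSpace ℂ E] {A P Q R : E →L[ℂ] E}

lemma aNorm_nonneg (A : E →L[ℂ] E) (u : E) : 0 ≤ aNorm A u := Real.sqrt_nonneg _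

lemma opNormA_nonneg (A R : E →L[ℂ] E) : 0 ≤ opNormA A R :=
  Real.sSup_nonneg (by rintro _ ⟨x, -, -, rfl⟩; exact aNorm_nonneg A _)

lemma aNorm_sq (hA : A.IsPositive) (u : E) : aNorm A u ^ 2 = (aInner A u u).re :=
  Real.sq_sqrt (hA.re_inner_nonneg_left u)

lemma aNorm_eq_zero_of_apply_eq_zero {z : E} (hz : A z = 0) : aNorm A z = 0 := by
  simp [aNorm, aInner, hz]

lemma aInner_smul_add_left (a b : ℝ) (u v : E) :
    aInner A ((a • P + b • Q) u) v = a * aInner A (P u) v + b * aInner A (Q u) v := by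
  simp only [aInner, add_apply, smul_apply, map_add, map_smul_of_tower, inner_add_left,
    inner_smul_left_eq_smul, Complex.real_smul]

lemma aInner_smul_add_right (a b : ℝ) (u v : E) :
    aInner A u ((a • P + b • Q) v) = a * aInner A u (P v) + b * aInner A u (Q v) := by
  simp only [aInner, add_apply, smul_apply, inner_add_right, inner_smul_right_eq_smul,
    Complex.real_smul]

-- Pointwise form of `A ∘L R = adjoint R ∘L A`.
def IsASelfAdjoint (A R : E →L[ℂ] E) : Prop :=
  ∀ u v, aInner A (R u) v = aInner A u (R v)

namespace IsASelfAdjoint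

lemma smul_add (hP : IsASelfAdjoint A P) (hQ : IsASelfAdjoint A Q) (a b : ℝ) :
    IsASelfAdjoint A (a • P + b • Q) := fun u v => by
  rw [aInner_smul_add_left, aInner_smul_add_right, hP, hQ]

lemma pow (hR : IsASelfAdjoint A R) (n : ℕ) : IsASelfAdjoint A (R ^ n) := by
  induction n with
  | zero => exact fun u v => rfl
  | succ n ih =>
    intro u v
    calc aInner A ((R ^ (n + 1)) u) v = aInner A ((R ^ n) (R u)) v := by rw [pow_succ]; rfl
      _ = aInner A u (R ((R ^ n) v)) := by rw [ih, hR]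
      _ = aInner A u ((R ^ (n + 1)) v) := by rw [pow_succ']; rfl

end IsASelfAdjoint

end Seminorm

variable {A R S T : H →L[ℂ] H}

lemma aInner_conj_symm (hA : IsSelfAdjoint A) (u v : H) :
    starRingEnd ℂ (aInner A v u) = aInner A u v := by
  rw [aInner, aInner, inner_conj_symm]
  exact (hA.isSymmetric u v).symm

lemma aInner_eq_inner_sqrt (hA : A.IsPositive) (u v : H) :
    aInner A u v = ⟪CFC.sqrt A u, CFC.sqrt A v⟫_ℂ := by
  have hAu : A u = (CFC.sqrt A * CFC.sqrt A) u := by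
    rw [CFC.sqrt_mul_sqrt_self A ((nonneg_iff_isPositive A).mpr hA)]
  rw [aInner, hAu]
  exact (IsSelfAdjoint.of_nonneg (CFC.sqrt_nonneg A)).isSymmetric _ _

lemma aNorm_eq_norm_sqrt (hA : A.IsPositive) (u : H) : aNorm A u = ‖CFC.sqrt A u‖ := by
  rw [aNorm, aInner_eq_inner_sqrt hA, ← RCLike.re_to_complex, inner_self_eq_norm_sq,
    Real.sqrt_sq (norm_nonneg _)]

lemma norm_aInner_le (hA : A.IsPositive) (u v : H) :
    ‖aInner A u v‖ ≤ aNorm A u * aNorm A v := by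
  rw [aInner_eq_inner_sqrt hA, aNorm_eq_norm_sqrt hA, aNorm_eq_norm_sqrt hA]
  exact norm_inner_le_norm _ _

lemma norm_aInner_apply_le_aNorm (hA : A.IsPositive) {x : H} (hx : aNorm A x = 1) :
    ‖aInner A (R x) x‖ ≤ aNorm A (R x) := by
  simpa [hx] using norm_aInner_le hA (R x) x

lemma aNorm_add_of_aNorm_eq_zero (hA : A.IsPositive) {u w : H} (hw : aNorm A w = 0) :
    aNorm A (u + w) = aNorm A u := by
  rw [aNorm_eq_norm_sqrt hA] at hw ⊢
  rw [map_add, norm_eq_zero.mp hw, add_zero, aNorm_eq_norm_sqrt hA]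

lemma aNorm_le_norm_sqrt_mul (hA : A.IsPositive) (u : H) :
    aNorm A u ≤ ‖CFC.sqrt A‖ * ‖u‖ := by
  rw [aNorm_eq_norm_sqrt hA]
  exact le_opNorm _ _

lemma exists_mem_closure_range_apply_sub_eq_zero (hA : IsSelfAdjoint A) (x : H) :
    ∃ p ∈ closure (Set.range A), A (x - p) = 0 := by
  set K := (LinearMap.range (A : H →ₗ[ℂ] H)).topologicalClosure
  obtain ⟨p, hp, z, hz, rfl⟩ := K.exists_add_mem_mem_orthogonal x
  rw [Submodule.orthogonal_closure, orthogonal_range, hA.adjoint_eq] at hz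
  refine ⟨p, ?_, by simpa using hz⟩
  have hpK : p ∈ (K : Set H) := hp
  rwa [Submodule.topologicalClosure_coe, LinearMap.coe_range] at hpK

namespace IsASelfAdjoint

lemma aNorm_apply_sq_le (hA : A.IsPositive) (hR : IsASelfAdjoint A R) (v : H) :
    aNorm A (R v) ^ 2 ≤ aNorm A v * aNorm A (R (R v)) :=
  calc aNorm A (R v) ^ 2 = (aInner A v (R (R v))).re := by rw [aNorm_sq hA, hR]
    _ ≤ ‖aInner A v (R (R v))‖ := Complex.re_le_norm _
    _ ≤ aNorm A v * aNorm A (R (R v)) := norm_aInner_le hA _ _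

lemma div_pow_two_pow_mul_le (hA : A.IsPositive) (hR : IsASelfAdjoint A R) {y : H}
    (hy : 0 < aNorm A y) (n : ℕ) :
    (aNorm A (R y) / aNorm A y) ^ 2 ^ n * aNorm A y ≤ aNorm A ((R ^ 2 ^ n) y) := by
  set c := aNorm A y
  induction n with
  | zero => simp [div_mul_cancel₀ _ hy.ne']
  | succ n ih =>
    set Q := R ^ 2 ^ n
    have hQQ : (R ^ 2 ^ (n + 1)) y = Q (Q y) := by
      rw [pow_succ, pow_mul, sq]; rfl
    refine le_of_mul_le_mul_right ?_ hy
    calc (aNorm A (R y) / c) ^ 2 ^ (n + 1) * c * c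
        = ((aNorm A (R y) / c) ^ 2 ^ n * c) ^ 2 := by rw [pow_succ, pow_mul]; ring
      _ ≤ aNorm A (Q y) ^ 2 := pow_le_pow_left₀
          (mul_nonneg (pow_nonneg (div_nonneg (aNorm_nonneg A _) hy.le) _) hy.le) ih 2
      _ ≤ c * aNorm A (Q (Q y)) := (hR.pow _).aNorm_apply_sq_le hA y
      _ = aNorm A ((R ^ 2 ^ (n + 1)) y) * c := by rw [hQQ, mul_comm]

lemma aNorm_apply_le (hA : A.IsPositive) (hR : IsASelfAdjoint A R) (y : H) :
    aNorm A (R y) ≤ ‖R‖ * aNorm A y := by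
  rcases (aNorm_nonneg A y).eq_or_lt with hy | hy
  · have h := hR.aNorm_apply_sq_le hA y
    rw [← hy, zero_mul] at h
    rw [← hy, mul_zero, (sq_nonpos_iff _).mp h]
  refine (div_le_iff₀ hy).mp (le_of_forall_pow_two_pow_le_mul_pow (norm_nonneg R)
    (K := ‖CFC.sqrt A‖ * ‖y‖ / aNorm A y) fun n => ?_)
  rw [div_mul_eq_mul_div, le_div_iff₀ hy]
  calc (aNorm A (R y) / aNorm A y) ^ 2 ^ n * aNorm A y ≤ aNorm A ((R ^ 2 ^ n) y) :=
        hR.div_pow_two_pow_mul_le hA hy n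
    _ ≤ ‖CFC.sqrt A‖ * ‖(R ^ 2 ^ n) y‖ := aNorm_le_norm_sqrt_mul hA _
    _ ≤ ‖CFC.sqrt A‖ * (‖R‖ ^ 2 ^ n * ‖y‖) := by
        gcongr
        exact (le_opNorm _ _).trans (by gcongr; exact norm_pow_le' R (by positivity))
    _ = ‖CFC.sqrt A‖ * ‖y‖ * ‖R‖ ^ 2 ^ n := by ring

lemma aBounded (hA : A.IsPositive) (hR : IsASelfAdjoint A R) : ABounded A R :=
  ⟨‖R‖ + 1, by positivity, fun x => (hR.aNorm_apply_le hA x).trans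
    (mul_le_mul_of_nonneg_right (by linarith) (aNorm_nonneg A x))⟩

end IsASelfAdjoint

lemma ABounded.aNorm_apply_le_opNormA (hA : A.IsPositive) (hR : ABounded A R) {x : H}
    (hx : aNorm A x = 1) : aNorm A (R x) ≤ opNormA A R := by
  obtain ⟨c, -, hc⟩ := hR
  obtain ⟨p, hp, hxp⟩ := exists_mem_closure_range_apply_sub_eq_zero hA.isSelfAdjoint x
  have hz : aNorm A (x - p) = 0 := aNorm_eq_zero_of_apply_eq_zero hxp
  have hRz : aNorm A (R (x - p)) = 0 :=
    le_antisymm (by simpa [hz] using hc (x - p)) (aNorm_nonneg A _)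
  have hpx : aNorm A p = aNorm A x := by
    simpa using (aNorm_add_of_aNorm_eq_zero hA hz (u := p)).symm
  have hRpx : aNorm A (R p) = aNorm A (R x) := by
    simpa using (aNorm_add_of_aNorm_eq_zero hA hRz (u := R p)).symm
  refine le_csSup ⟨c, ?_⟩ ⟨p, hp, hpx.trans hx, hRpx.symm⟩
  rintro _ ⟨y, -, hy, rfl⟩
  simpa [hy] using hc y

namespace IsAAdjoint

lemma aInner_left (hT : IsAAdjoint A T S) (u v : H) :
    aInner A (S u) v = aInner A u (T v) := by
  rw [aInner, aInner, ← comp_apply, hT.1, comp_apply, adjoint_inner_left]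

lemma aInner_right (hA : IsSelfAdjoint A) (hT : IsAAdjoint A T S) (u v : H) :
    aInner A u (S v) = aInner A (T u) v := by
  rw [← aInner_conj_symm hA, hT.aInner_left, aInner_conj_symm hA]

lemma isASelfAdjoint_sharp_comp (hA : IsSelfAdjoint A) (hT : IsAAdjoint A T S) :
    IsASelfAdjoint A (S ∘L T) := fun u v => by
  rw [comp_apply, comp_apply, hT.aInner_left, hT.aInner_right hA]

lemma isASelfAdjoint_comp_sharp (hA : IsSelfAdjoint A) (hT : IsAAdjoint A T S) :
    IsASelfAdjoint A (T ∘L S) := fun u v => by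
  rw [comp_apply, comp_apply, ← hT.aInner_right hA, hT.aInner_left]

lemma re_aInner_smul_add_apply (hA : A.IsPositive) (hT : IsAAdjoint A T S) (a b : ℝ) (x : H) :
    (aInner A ((a • (S ∘L T) + b • (T ∘L S)) x) x).re =
      a * aNorm A (T x) ^ 2 + b * aNorm A (S x) ^ 2 := by
  rw [aInner_smul_add_left, comp_apply, comp_apply, hT.aInner_left (T x),
    ← hT.aInner_right hA.isSelfAdjoint (S x), aNorm_sq hA, aNorm_sq hA]
  simp only [Complex.add_re, Complex.re_ofReal_mul]

lemma smul_add_le_opNormA (hA : A.IsPositive) (hT : IsAAdjoint A T S) (a b : ℝ) {x : H}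
    (hx : aNorm A x = 1) :
    a * aNorm A (T x) ^ 2 + b * aNorm A (S x) ^ 2 ≤
      opNormA A (a • (S ∘L T) + b • (T ∘L S)) := by
  set R := a • (S ∘L T) + b • (T ∘L S)
  have hR : IsASelfAdjoint A R :=
    (hT.isASelfAdjoint_sharp_comp hA.isSelfAdjoint).smul_add
      (hT.isASelfAdjoint_comp_sharp hA.isSelfAdjoint) a b
  calc a * aNorm A (T x) ^ 2 + b * aNorm A (S x) ^ 2 = (aInner A (R x) x).re :=
        (hT.re_aInner_smul_add_apply hA a b x).symm
    _ ≤ ‖aInner A (R x) x‖ := Complex.re_le_norm _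
    _ ≤ aNorm A (R x) := norm_aInner_apply_le_aNorm hA hx
    _ ≤ opNormA A R := (hR.aBounded hA).aNorm_apply_le_opNormA hA hx

lemma norm_aInner_apply_le_aNorm_sharp (hA : A.IsPositive) (hT : IsAAdjoint A T S) {x : H}
    (hx : aNorm A x = 1) : ‖aInner A (T x) x‖ ≤ aNorm A (S x) := by
  simpa [hx, ← hT.aInner_right hA.isSelfAdjoint] using norm_aInner_le hA x (S x)

end IsAAdjoint

theorem stmt19 (A T S : H →L[ℂ] H) (hA : A.IsPositive) (hT : IsAAdjoint A T S)
    (α : ℝ) (hα : α ∈ Set.Icc (0:ℝ) 1) :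
    alphaNorm A T α ^ 2 ≤ opNormA A ((1 - α) • (S ∘L T) + α • (T ∘L S)) ∧
    wA A T ^ 2 ≤
      sInf {r | ∃ β ∈ Set.Icc (0:ℝ) 1,
        r = opNormA A (β • (S ∘L T) + (1 - β) • (T ∘L S))} := by
  obtain ⟨hα0, hα1⟩ := hα
  refine ⟨sq_sSup_le (opNormA_nonneg _ _) ?_, le_csInf ⟨_, 0, ⟨le_rfl, zero_le_one⟩, rfl⟩ ?_⟩
  · rintro _ ⟨x, hx, rfl⟩
    have hTS := hT.norm_aInner_apply_le_aNorm_sharp hA hx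
    have hX : 0 ≤ α * ‖aInner A (T x) x‖ ^ 2 + (1 - α) * aNorm A (T x) ^ 2 :=
      add_nonneg (mul_nonneg hα0 (sq_nonneg _)) (mul_nonneg (sub_nonneg.2 hα1) (sq_nonneg _))
    refine ⟨Real.sqrt_nonneg _, ?_⟩
    rw [Real.sq_sqrt hX]
    have := hT.smul_add_le_opNormA hA (1 - α) α hx
    linarith [mul_le_mul_of_nonneg_left (pow_le_pow_left₀ (norm_nonneg _) hTS 2) hα0]
  · rintro _ ⟨β, ⟨hβ0, hβ1⟩, rfl⟩
    refine sq_sSup_le (opNormA_nonneg _ _) ?_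
    rintro _ ⟨x, hx, rfl⟩
    have hTT := norm_aInner_apply_le_aNorm hA (R := T) hx
    have hTS := hT.norm_aInner_apply_le_aNorm_sharp hA hx
    have := hT.smul_add_le_opNormA hA β (1 - β) hx
    refine ⟨norm_nonneg _, ?_⟩
    linarith [mul_le_mul_of_nonneg_left (pow_le_pow_left₀ (norm_nonneg _) hTT 2) hβ0,
      mul_le_mul_of_nonneg_left (pow_le_pow_left₀ (norm_nonneg _) hTS 2) (sub_nonneg.2 hβ1)]
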